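/- arXiv:2512.25022 — 3 statements merged into one kernel-verified Lean document; each statement's English description precedes it below -/
import Mathlib

section
/- Let N be a free ℤ-module of finite rank n and f : N → N a module endomorphism with f ∘ f = id. Then ker(id − f) is a direct summand of N, and the induced map of f on the quotient N / ker(id − f) is −id. -/
open LinearMap

theorem LinearMap.exists_isCompl_ker_of_surjective {R M P : Type*} [Ring R]
    [AddCommGroup M] [Module R M] [AddCommGroup P] [Module R P] [Module.Projective R P]
    (π : M →ₗ[R] P) (hπ : Function.Surjective π) : ∃ q : Submodule R M, IsCompl (ker π) q := by
  obtain ⟨s, hs⟩ := Module.projective_lifting_property π LinearMap.id hπ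
  have hidem : IsIdempotentElem (s ∘ₗ π) := by
    change s ∘ₗ (π ∘ₗ s) ∘ₗ π = s ∘ₗ π
    rw [hs, LinearMap.id_comp]
  refine ⟨range (s ∘ₗ π), ?_⟩
  have hs_inj : ker s = ⊥ := ker_eq_bot_of_inverse hs
  rw [← ker_comp_of_ker_eq_bot π hs_inj]
  exact hidem.isCompl.symm

/-- `range g` is finite and torsion-free, hence free over a PID, so `M → range g` splits. -/
theorem LinearMap.exists_isCompl_ker {R M N : Type*} [CommRing R] [IsDomain R]
    [IsPrincipalIdealRing R] [AddCommGroup M] [Module R M] [AddCommGroup N] [Module R N]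
    [Module.Finite R M] [Module.IsTorsionFree R N] (g : M →ₗ[R] N) :
    ∃ q : Submodule R M, IsCompl (ker g) q := by
  rw [← ker_rangeRestrict]
  exact g.rangeRestrict.exists_isCompl_ker_of_surjective g.surjective_rangeRestrict

theorem LinearMap.quotient_mk_apply_eq_neg_of_comp_self {R M : Type*} [Ring R]
    [AddCommGroup M] [Module R M] (f : M →ₗ[R] M) (hf : f ∘ₗ f = LinearMap.id) (x : M) :
    (Submodule.Quotient.mk (f x) : M ⧸ ker (LinearMap.id - f)) = -Submodule.Quotient.mk x := by
  rw [← Submodule.Quotient.mk_neg, Submodule.Quotient.eq, sub_neg_eq_add, mem_ker,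
    sub_apply, id_apply, map_add, ← comp_apply f f, hf, id_apply]
  abel

/-- For a `ℤ`-linear involution `f` of a finite free `ℤ`-module `N`, the kernel of
`id − f` (the fixed submodule) is a direct summand of `N`, and the map induced by
`f` on the quotient `N ⧸ ker(id − f)` is `−id`. -/
theorem stmt_2 (N : Type*) [AddCommGroup N] [Module ℤ N]
    [Module.Free ℤ N] [Module.Finite ℤ N]
    (f : N →ₗ[ℤ] N) (hf : f ∘ₗ f = LinearMap.id) :
    (∃ q : Submodule ℤ N, IsCompl (LinearMap.ker (LinearMap.id - f)) q) ∧
    (∀ x : N,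
      (Submodule.Quotient.mk (f x) :
        N ⧸ LinearMap.ker (LinearMap.id - f)) = -Submodule.Quotient.mk x) :=
  ⟨(LinearMap.id - f).exists_isCompl_ker, f.quotient_mk_apply_eq_neg_of_comp_self hf⟩
end

section
/- Let N be a free ℤ-module of rank n and f a ℤ-linear involution on N whose fixed submodule ker(id − f) has rank d. Then there exists a basis (a₁, …, a_d, b₁, …, b_{n−d}) of N such that f(a_i) = a_i for all i, and f(b_i) = Σ_k h_{ki} a_k − b_i for all i, where each h_{ki} ∈ {0, 1}. -/
/-!
The fixed lattice `K = ker (id - f)` is saturated in `N` (it is the kernel of a map into the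
torsion-free module `N`), so `N ⧸ K` is free and `N ≅ K ⊕ N ⧸ K`. Lifting a basis of `N ⧸ K`
to vectors `bᵢ`, each `bᵢ + f bᵢ` is fixed by `f`, hence `f bᵢ = ∑ₖ mₖᵢ aₖ - bᵢ` over a basis `a`
of `K`. Replacing `bᵢ` by `bᵢ - ∑ₖ ⌊mₖᵢ / 2⌋ aₖ` (a change of basis `[[I, B], [0, I]]`) changes
`mₖᵢ` by an even number and brings it into `{0, 1}`.
-/

open Module LinearMap

namespace Submodule

section Ring

variable {R M : Type*} [Ring R] [AddCommGroup M] [Module R M] {p : Submodule R M}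

theorem bijective_coprod_subtype_of_mkQ_comp_eq_id {σ : M ⧸ p →ₗ[R] M}
    (hσ : p.mkQ ∘ₗ σ = LinearMap.id) : Function.Bijective (p.subtype.coprod σ) := by
  have hσ' (q : M ⧸ p) : Quotient.mk (σ q) = q := LinearMap.congr_fun hσ q
  refine ⟨fun ⟨k, q⟩ ⟨k', q'⟩ hkq ↦ ?_, fun x ↦ ?_⟩
  · simp only [coprod_apply, subtype_apply] at hkq
    have hq : q = q' := by
      simpa [hσ', (Quotient.mk_eq_zero p).mpr k.2, (Quotient.mk_eq_zero p).mpr k'.2]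
        using congr(p.mkQ $hkq)
    subst hq
    exact Prod.ext (Subtype.ext (add_right_cancel hkq)) rfl
  · have hmem : x - σ (p.mkQ x) ∈ p := by
      rw [← Quotient.mk_eq_zero, Quotient.mk_sub, ← mkQ_apply, hσ', sub_self]
    exact ⟨(⟨_, hmem⟩, p.mkQ x), by simp⟩

end Ring

section CommRing

variable {R M : Type*} [CommRing R] [AddCommGroup M] [Module R M] {p : Submodule R M}

noncomputable def basisSumOfLift {ι κ : Type*} (a : Basis ι R p) (c : Basis κ R (M ⧸ p))
    (b : κ → M) (hb : ∀ i, p.mkQ (b i) = c i) : Basis (ι ⊕ κ) R M :=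
  (a.prod c).map <| .ofBijective _ <|
    bijective_coprod_subtype_of_mkQ_comp_eq_id (σ := c.constr R b) (c.ext fun i ↦ by simp [hb])

variable {ι κ : Type*} (a : Basis ι R p) (c : Basis κ R (M ⧸ p)) (b : κ → M)
  (hb : ∀ i, p.mkQ (b i) = c i)

@[simp]
theorem basisSumOfLift_inl (k : ι) : basisSumOfLift a c b hb (.inl k) = a k := by
  simp [basisSumOfLift]

@[simp]
theorem basisSumOfLift_inr (i : κ) : basisSumOfLift a c b hb (.inr i) = b i := by
  simp [basisSumOfLift]

end CommRing

end Submodule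

theorem LinearMap.isTorsionFree_quotient_ker {R M M' : Type*} [Ring R] [AddCommGroup M]
    [AddCommGroup M'] [Module R M] [Module R M'] [IsTorsionFree R M'] (g : M →ₗ[R] M') :
    IsTorsionFree R (M ⧸ ker g) :=
  let j := g.range.subtype ∘ₗ g.quotKerEquivRange.toLinearMap
  Function.Injective.moduleIsTorsionFree j (by simpa [j] using g.quotKerEquivRange.injective)
    (map_smul j)

namespace LinearMap

variable {R M : Type*} [Ring R] [AddCommGroup M] [Module R M] {f : M →ₗ[R] M}

theorem mem_ker_id_sub_iff {x : M} : x ∈ ker (id - f) ↔ f x = x := by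
  rw [mem_ker, sub_apply, id_apply, sub_eq_zero, eq_comm]

theorem add_apply_mem_ker_id_sub (hf : f ∘ₗ f = id) (x : M) : x + f x ∈ ker (id - f) := by
  rw [mem_ker_id_sub_iff, map_add, ← comp_apply, hf, id_apply, add_comm]

/-- Moving `x` by a fixed vector changes `x + f x` by twice that vector, so the coordinates of
`x + f x` in a basis of the fixed lattice can be reduced modulo `2`. -/
theorem exists_sub_mem_ker_id_sub_apply_eq {ι : Type*} [Fintype ι] {f : M →ₗ[ℤ] M}
    (hf : f ∘ₗ f = id) (a : Basis ι ℤ (ker (id - f))) (x : M) :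
    ∃ (y : M) (h : ι → ℤ), y - x ∈ ker (id - f) ∧ (∀ k, h k = 0 ∨ h k = 1) ∧
      f y = ∑ k, h k • (a k : M) - y := by
  set s : ker (id - f) := ⟨_, add_apply_mem_ker_id_sub hf x⟩
  set m := a.repr s
  set t := ∑ k, (m k / 2) • a k
  refine ⟨x - t, fun k ↦ m k % 2, by simp, fun k ↦ Int.emod_two_eq_zero_or_one _, ?_⟩
  have hmod : ∑ k, (m k % 2) • (a k : M) = x + f x - (2 : ℤ) • (t : M) := by
    have hs : x + f x = ∑ k, m k • (a k : M) := by
      have := congr_arg Subtype.val (a.sum_repr s)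
      simp only [Submodule.coe_sum, Submodule.coe_smul] at this
      exact this.symm
    simp only [hs, t, Submodule.coe_sum, Submodule.coe_smul, Finset.smul_sum,
      eq_sub_iff_add_eq, ← Finset.sum_add_distrib, smul_smul, ← add_smul, Int.emod_add_mul_ediv]
  rw [map_sub, mem_ker_id_sub_iff.mp t.2, hmod, two_smul]
  abel

end LinearMap

/-- For a `ℤ`-linear involution `f` of a free `ℤ`-module of rank `n` whose fixed
submodule has rank `d`, there is a basis `(a₁,…,a_d,b₁,…,b_{n-d})` with
`f aᵢ = aᵢ` and `f bᵢ = ∑ₖ h_{ki} aₖ − bᵢ` where `h_{ki} ∈ {0,1}`. -/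
theorem stmt_3 (N : Type*) [AddCommGroup N] [Module ℤ N]
    [Module.Free ℤ N] [Module.Finite ℤ N] (n d : ℕ)
    (hn : Module.finrank ℤ N = n)
    (f : N →ₗ[ℤ] N) (hf : f ∘ₗ f = LinearMap.id)
    (hd : Module.finrank ℤ (LinearMap.ker (LinearMap.id - f)) = d) :
    ∃ (e : Module.Basis (Fin d ⊕ Fin (n - d)) ℤ N)
      (h : Matrix (Fin d) (Fin (n - d)) ℤ),
      (∀ k i, h k i = 0 ∨ h k i = 1) ∧
      (∀ i : Fin d, f (e (Sum.inl i)) = e (Sum.inl i)) ∧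
      (∀ i : Fin (n - d),
        f (e (Sum.inr i)) = (∑ k : Fin d, h k i • e (Sum.inl k)) - e (Sum.inr i)) := by
  -- instances such as `Module.Free ℤ K` are only found for the canonical `ℤ`-module structure
  obtain rfl : ‹Module ℤ N› = AddCommGroup.toIntModule N := Subsingleton.elim _ _
  set K := ker (LinearMap.id - f)
  have : IsTorsionFree ℤ (N ⧸ K) := (LinearMap.id - f).isTorsionFree_quotient_ker
  have hrank : finrank ℤ (N ⧸ K) = n - d := by
    have := K.finrank_quotient_add_finrank
    omega
  let a := (finBasis ℤ K).reindex (finCongr hd)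
  let c := (finBasis ℤ (N ⧸ K)).reindex (finCongr hrank)
  choose x hx using fun i ↦ K.mkQ_surjective (c i)
  choose y h hyx h01 hfy using fun i ↦ exists_sub_mem_ker_id_sub_apply_eq hf a (x i)
  have hyc (i : Fin (n - d)) : K.mkQ (y i) = c i := by
    rw [← hx, ← sub_eq_zero, ← map_sub, Submodule.mkQ_apply, Submodule.Quotient.mk_eq_zero]
    exact hyx i
  refine ⟨K.basisSumOfLift a c y hyc, Matrix.of fun k i ↦ h i k, fun k i ↦ h01 i k,
    fun i ↦ ?_, fun i ↦ ?_⟩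
  · simpa using mem_ker_id_sub_iff.mp (a i).2
  · simpa using hfy i
end

section
/- Every symmetric matrix over ℤ₂ is congruent to a block diagonal matrix of the form diag(I_k, G_m, 0), where I_k is a k × k identity block and G_m is a direct sum of m copies of the 2×2 block [[0,1],[1,0]]. -/
/-!
Induction on `n`. If some diagonal entry of `A` is `1`, move it to the corner: it is an
invertible `1 × 1` pivot, and the congruence by the block elimination matrix splits off `I_1`
and leaves the symmetric Schur complement. Otherwise `A` is alternating; if `A ≠ 0`, an entry
`A i j = 1` gives the invertible pivot `[[0,1],[1,0]]` on the rows `i, j`, which splits off in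
the same way. In characteristic `2` congruence preserves alternating matrices, so the Schur
complement is again alternating and the recursion never produces another `I_1` block.
-/

open Matrix

namespace Matrix

section IsCongruent

variable {ι κ R : Type*} [Fintype ι] [DecidableEq ι] [Fintype κ] [DecidableEq κ] [CommRing R]

def IsCongruent (A B : Matrix ι ι R) : Prop :=
  ∃ P : Matrix ι ι R, IsUnit P ∧ P * A * Pᵀ = B

namespace IsCongruent

variable {A B C : Matrix ι ι R}

theorem refl (A : Matrix ι ι R) : IsCongruent A A :=
  ⟨1, isUnit_one, by simp⟩

theorem symm (h : IsCongruent A B) : IsCongruent B A := by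
  obtain ⟨P, hP, rfl⟩ := h
  refine ⟨P⁻¹, isUnit_nonsing_inv_iff.2 hP, ?_⟩
  rw [isUnit_iff_isUnit_det] at hP
  rw [transpose_nonsing_inv, Matrix.mul_assoc, Matrix.mul_assoc,
    mul_nonsing_inv _ (by rwa [det_transpose]), Matrix.mul_one, ← Matrix.mul_assoc,
    nonsing_inv_mul _ hP, Matrix.one_mul]

theorem trans (h₁ : IsCongruent A B) (h₂ : IsCongruent B C) : IsCongruent A C := by
  obtain ⟨P, hP, rfl⟩ := h₁
  obtain ⟨Q, hQ, rfl⟩ := h₂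
  exact ⟨Q * P, hQ.mul hP, by simp only [transpose_mul, Matrix.mul_assoc]⟩

theorem isSymm (h : IsCongruent A B) (hA : A.IsSymm) : B.IsSymm := by
  obtain ⟨P, -, rfl⟩ := h
  simp only [IsSymm, transpose_mul, transpose_transpose, hA.eq, Matrix.mul_assoc]

theorem diag_eq_zero [CharP R 2] (h : IsCongruent A B) (hA : A.IsSymm) (hA₀ : ∀ i, A i i = 0)
    (i : ι) : B i i = 0 := by
  obtain ⟨P, -, rfl⟩ := h
  -- In `∑ a b, P i a * A a b * P i b` the terms `(a, b)` and `(b, a)` cancel in characteristic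
  -- `2`, and the terms with `a = b` vanish.
  have hterm : ∀ j, (P * A) i j * Pᵀ j i = ∑ a, P i a * A a j * P i j := fun j => by
    rw [mul_apply, transpose_apply, Finset.sum_mul]
  rw [mul_apply, Finset.sum_congr rfl fun j _ => hterm j, ← Finset.sum_product']
  refine Finset.sum_ninvolution Prod.swap (fun p => ?_) (fun p hp => ?_) (fun _ => by simp)
    Prod.swap_swap
  · obtain ⟨a, b⟩ := p
    rw [Prod.fst_swap, Prod.snd_swap, hA.apply a b,
      show P i b * A a b * P i a = P i a * A a b * P i b by ring]
    exact CharTwo.add_self_eq_zero _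
  · obtain ⟨a, b⟩ := p
    rintro hswap
    obtain rfl : b = a := congrArg Prod.fst hswap
    simp [hA₀] at hp

theorem submatrix (h : IsCongruent A B) (e : κ ≃ ι) :
    IsCongruent (A.submatrix e e) (B.submatrix e e) := by
  obtain ⟨P, hP, rfl⟩ := h
  refine ⟨P.submatrix e e, ?_, ?_⟩
  · rwa [isUnit_iff_isUnit_det, det_submatrix_equiv_self, ← isUnit_iff_isUnit_det]
  · rw [transpose_submatrix, submatrix_mul_equiv, submatrix_mul_equiv]

theorem fromBlocks {A' : Matrix κ κ R} {B' : Matrix κ κ R} (h : IsCongruent A B)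
    (h' : IsCongruent A' B') : IsCongruent (fromBlocks A 0 0 A') (fromBlocks B 0 0 B') := by
  obtain ⟨P, hP, rfl⟩ := h
  obtain ⟨Q, hQ, rfl⟩ := h'
  refine ⟨Matrix.fromBlocks P 0 0 Q, isUnit_fromBlocks_zero₂₁.2 ⟨hP, hQ⟩, ?_⟩
  simp [fromBlocks_transpose, fromBlocks_multiply]

end IsCongruent

theorem isCongruent_submatrix_iff {A B : Matrix ι ι R} (e : κ ≃ ι) :
    IsCongruent (A.submatrix e e) (B.submatrix e e) ↔ IsCongruent A B :=
  ⟨fun h => by simpa using h.submatrix e.symm, fun h => h.submatrix e⟩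

theorem isCongruent_submatrix_perm (A : Matrix ι ι R) (σ : Equiv.Perm ι) :
    IsCongruent A (A.submatrix σ σ) := by
  refine ⟨σ.permMatrix R, ?_, ?_⟩
  · rw [isUnit_iff_isUnit_det, det_permutation]
    exact (Equiv.Perm.sign σ).isUnit.map (Int.castRingHom R)
  · ext i j
    simp [mul_apply, Equiv.symm_apply_eq]

theorem IsSymm.isCongruent_fromBlocks_schur {α β : Type*} [Fintype α] [DecidableEq α]
    [Fintype β] [DecidableEq β] {M : Matrix (α ⊕ β) (α ⊕ β) R} (hM : M.IsSymm)
    {E : Matrix α α R} [Invertible E] (hE : M.toBlocks₁₁ = E) :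
    IsCongruent M (Matrix.fromBlocks E 0 0
      (M.toBlocks₂₂ - M.toBlocks₂₁ * ⅟E * M.toBlocks₁₂)) := by
  obtain ⟨hEs, hBC, hCB, -⟩ := isSymm_fromBlocks_iff.1 (M.fromBlocks_toBlocks ▸ hM)
  rw [hE] at hEs
  have hEinv : (⅟E)ᵀ = ⅟E := by rw [invOf_eq_nonsing_inv, transpose_nonsing_inv, hEs.eq]
  refine IsCongruent.symm ⟨Matrix.fromBlocks 1 0 (M.toBlocks₂₁ * ⅟E) 1, ?_, ?_⟩
  · simp
  · conv_rhs => rw [← M.fromBlocks_toBlocks, hE, fromBlocks_eq_of_invertible₁₁]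
    rw [fromBlocks_transpose, transpose_mul, hEinv, hCB]
    simp

theorem IsSymm.exists_isCongruent_fromBlocks {a l : ℕ} {A : Matrix (Fin (a + l)) (Fin (a + l)) R}
    (hA : A.IsSymm) {g : Fin a → Fin (a + l)} (hg : g.Injective) {E : Matrix (Fin a) (Fin a) R}
    [Invertible E] (hE : A.submatrix g g = E) :
    ∃ S : Matrix (Fin l) (Fin l) R,
      IsCongruent (A.submatrix finSumFinEquiv finSumFinEquiv) (Matrix.fromBlocks E 0 0 S) := by
  obtain ⟨σ, hσ⟩ := Equiv.Perm.exists_extending_pair (fun x => finSumFinEquiv (Sum.inl x)) g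
    (finSumFinEquiv.injective.comp Sum.inl_injective) hg
  set M := (A.submatrix σ σ).submatrix finSumFinEquiv finSumFinEquiv
  have hM : M.IsSymm := (hA.submatrix σ).submatrix finSumFinEquiv
  have hM₁₁ : M.toBlocks₁₁ = E := by
    rw [← hE]
    ext x y
    simp only [M, toBlocks₁₁, of_apply, submatrix_apply, hσ]
  exact ⟨_, ((isCongruent_submatrix_perm A σ).submatrix finSumFinEquiv).trans
    (hM.isCongruent_fromBlocks_schur hM₁₁)⟩

end IsCongruent

end Matrix

theorem ZMod.eq_one_of_ne_zero_two {x : ZMod 2} (hx : x ≠ 0) : x = 1 :=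
  Fin.eq_one_of_ne_zero x hx

def canonicalForm (R : Type*) [Zero R] [One R] (n k m : ℕ) : Matrix (Fin n) (Fin n) R :=
  Matrix.of fun i j : Fin n =>
    if i = j ∧ i.val < k then 1
    else if k ≤ i.val ∧ i.val < k + 2 * m ∧ k ≤ j.val ∧ j.val < k + 2 * m ∧
        (i.val - k) / 2 = (j.val - k) / 2 ∧ i ≠ j then 1
    else 0

section canonicalForm

variable {R : Type*} [Zero R] [One R]

theorem canonicalForm_zero_zero (n : ℕ) : canonicalForm R n 0 0 = 0 := by
  ext i j
  simp [canonicalForm]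

theorem canonicalForm_submatrix_one_add (l k m : ℕ) :
    (canonicalForm R (1 + l) (1 + k) m).submatrix finSumFinEquiv finSumFinEquiv =
      fromBlocks 1 0 0 (canonicalForm R l k m) := by
  ext (a | i) (b | j) <;>
  simp only [canonicalForm, submatrix_apply, of_apply, fromBlocks_apply₁₁,
    fromBlocks_apply₁₂, fromBlocks_apply₂₁, fromBlocks_apply₂₂,
    finSumFinEquiv_apply_left, finSumFinEquiv_apply_right, ne_eq, Fin.ext_iff,
    Fin.val_castAdd, Fin.val_natAdd, Matrix.zero_apply, one_apply] <;>
  split_ifs <;> first | rfl | omega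

theorem canonicalForm_submatrix_two_add (l m : ℕ) :
    (canonicalForm R (2 + l) 0 (1 + m)).submatrix finSumFinEquiv finSumFinEquiv =
      fromBlocks !![0, 1; 1, 0] 0 0 (canonicalForm R l 0 m) := by
  ext (a | i) (b | j)
  · fin_cases a <;> fin_cases b <;> simp [canonicalForm] <;> omega
  all_goals
    simp only [canonicalForm, submatrix_apply, of_apply, fromBlocks_apply₁₂,
      fromBlocks_apply₂₁, fromBlocks_apply₂₂, finSumFinEquiv_apply_left,
      finSumFinEquiv_apply_right, ne_eq, Fin.ext_iff, Fin.val_castAdd, Fin.val_natAdd,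
      Matrix.zero_apply]
    split_ifs <;> first | rfl | omega

end canonicalForm

theorem exists_isCongruent_canonicalForm_of_diag_eq_zero (n : ℕ)
    (A : Matrix (Fin n) (Fin n) (ZMod 2)) (hA : A.IsSymm) (hA₀ : ∀ i, A i i = 0) :
    ∃ m, 2 * m ≤ n ∧ IsCongruent A (canonicalForm (ZMod 2) n 0 m) := by
  induction n using Nat.strong_induction_on with
  | h n ih =>
  by_cases hzero : A = 0
  · exact ⟨0, by omega, by rw [hzero, canonicalForm_zero_zero]; exact .refl 0⟩
  obtain ⟨i, j, hij⟩ : ∃ i j, A i j ≠ 0 := by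
    by_contra! h
    exact hzero (ext h)
  replace hij := ZMod.eq_one_of_ne_zero_two hij
  have hne : i ≠ j := by rintro rfl; simp [hA₀] at hij
  obtain ⟨l, rfl⟩ : ∃ l, n = 2 + l := ⟨n - 2, by have := Fin.val_ne_of_ne hne; omega⟩
  let : Invertible !![(0 : ZMod 2), 1; 1, 0] :=
    invertibleOfLeftInverse _ !![0, 1; 1, 0] (by decide)
  have hg : Function.Injective ![i, j] := by
    intro x y hxy
    fin_cases x <;> fin_cases y <;> simp_all [eq_comm]
  have hE : A.submatrix ![i, j] ![i, j] = !![0, 1; 1, 0] := by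
    ext x y
    fin_cases x <;> fin_cases y <;> simp [hA₀, hij, (hA.apply i j).trans hij]
  obtain ⟨S, hAS⟩ := hA.exists_isCongruent_fromBlocks hg hE
  have hS : S.IsSymm := (isSymm_fromBlocks_iff.1 (hAS.isSymm (hA.submatrix _))).2.2.2
  have hS₀ (i : Fin l) : S i i = 0 :=
    hAS.diag_eq_zero (hA.submatrix _) (fun _ => hA₀ _) (.inr i)
  obtain ⟨m, hm, hSm⟩ := ih l (by omega) S hS hS₀
  refine ⟨1 + m, by omega, (isCongruent_submatrix_iff finSumFinEquiv).1 ?_⟩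
  rw [canonicalForm_submatrix_two_add]
  exact hAS.trans ((IsCongruent.refl _).fromBlocks hSm)

theorem exists_isCongruent_canonicalForm (n : ℕ) (A : Matrix (Fin n) (Fin n) (ZMod 2))
    (hA : A.IsSymm) :
    ∃ k m, k + 2 * m ≤ n ∧ IsCongruent A (canonicalForm (ZMod 2) n k m) := by
  induction n using Nat.strong_induction_on with
  | h n ih =>
  by_cases hA₀ : ∀ i, A i i = 0
  · obtain ⟨m, hm, h⟩ := exists_isCongruent_canonicalForm_of_diag_eq_zero n A hA hA₀
    exact ⟨0, m, by omega, h⟩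
  obtain ⟨i, hi⟩ := not_forall.1 hA₀
  obtain ⟨l, rfl⟩ : ∃ l, n = 1 + l := ⟨n - 1, by have := i.isLt; omega⟩
  have hE : A.submatrix (fun _ : Fin 1 => i) (fun _ : Fin 1 => i) = 1 := by
    ext x y
    fin_cases x; fin_cases y
    simpa using ZMod.eq_one_of_ne_zero_two hi
  let : Invertible (1 : Matrix (Fin 1) (Fin 1) (ZMod 2)) := invertibleOne
  obtain ⟨S, hAS⟩ := hA.exists_isCongruent_fromBlocks (Function.injective_of_subsingleton _) hE
  have hS : S.IsSymm := (isSymm_fromBlocks_iff.1 (hAS.isSymm (hA.submatrix _))).2.2.2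
  obtain ⟨k, m, hkm, hSk⟩ := ih l (by omega) S hS
  refine ⟨1 + k, m, by omega, (isCongruent_submatrix_iff finSumFinEquiv).1 ?_⟩
  rw [canonicalForm_submatrix_one_add]
  exact hAS.trans ((IsCongruent.refl _).fromBlocks hSk)

/-- Every symmetric matrix over `ℤ₂` is congruent to a block diagonal matrix
`diag(I_k, G_m, 0)` where `I_k` is a `k × k` identity block and `G_m` is a
direct sum of `m` copies of `[[0,1],[1,0]]`, followed by a zero block. -/
theorem stmt_9 (n : ℕ) (A : Matrix (Fin n) (Fin n) (ZMod 2)) (hsymm : A.IsSymm) :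
    ∃ (k m : ℕ) (P : Matrix (Fin n) (Fin n) (ZMod 2)),
      k + 2 * m ≤ n ∧ IsUnit P ∧
      P * A * Pᵀ = Matrix.of (fun i j : Fin n =>
        if i = j ∧ i.val < k then 1
        else if k ≤ i.val ∧ i.val < k + 2 * m ∧ k ≤ j.val ∧ j.val < k + 2 * m ∧
            (i.val - k) / 2 = (j.val - k) / 2 ∧ i ≠ j then 1
        else 0) := by
  obtain ⟨k, m, hkm, P, hP, hPA⟩ := exists_isCongruent_canonicalForm n A hsymm
  exact ⟨k, m, P, hkm, hP, hPA⟩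
end
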